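/- For every bounded linear operator A on a complex Hilbert space, w³(A) ≤ (1/4)[ w(A³) + ‖A‖·‖A²‖ + w(A)·‖A*A + AA*‖ ]. -/

import Mathlib

/-!
Fix a unit vector `x` and rotate `A` by a unimodular scalar so that `⟪A x, x⟫ ≥ 0`; none of the
quantities on the right-hand side changes. The self-adjoint operator `C = A + A*` then satisfies
`2 |⟪A x, x⟫| ≤ ‖C‖ ≤ 2 w(A)`, and `‖C‖³ ≤ ‖C³‖` because the norm of a self-adjoint element is its
spectral radius. Expanding
`C³ = (A³ + A*³) + C (A*A + AA*) + (A*A² + AA*²)`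
and bounding the three terms by `2 w(A³)`, `2 w(A) ‖A*A + AA*‖` and `2 ‖A‖ ‖A²‖` gives
`8 |⟪A x, x⟫|³ ≤ 2 (w(A³) + ‖A‖ ‖A²‖ + w(A) ‖A*A + AA*‖)`.
-/

open scoped InnerProductSpace
open ContinuousLinearMap

/-- The numerical radius of a bounded linear operator. -/
noncomputable def numRadius {H : Type*} [NormedAddCommGroup H] [InnerProductSpace ℂ H]
    (A : H →L[ℂ] H) : ℝ :=
  sSup {r : ℝ | ∃ x : H, ‖x‖ = 1 ∧ r = ‖⟪A x, x⟫_ℂ‖}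

/-- The Crawford number of a bounded linear operator. -/
noncomputable def crawford {H : Type*} [NormedAddCommGroup H] [InnerProductSpace ℂ H]
    (A : H →L[ℂ] H) : ℝ :=
  sInf {r : ℝ | ∃ x : H, ‖x‖ = 1 ∧ r = ‖⟪A x, x⟫_ℂ‖}

/-- The real part of a bounded linear operator. -/
noncomputable def reP {H : Type*} [NormedAddCommGroup H] [InnerProductSpace ℂ H]
    [CompleteSpace H] (A : H →L[ℂ] H) : H →L[ℂ] H :=
  ((2 : ℂ)⁻¹) • (A + adjoint A)

/-- The imaginary part of a bounded linear operator. -/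
noncomputable def imP {H : Type*} [NormedAddCommGroup H] [InnerProductSpace ℂ H]
    [CompleteSpace H] (A : H →L[ℂ] H) : H →L[ℂ] H :=
  ((2 * Complex.I)⁻¹) • (A - adjoint A)

section CStarAlgebra

open scoped ENNReal

variable {A : Type*} [CStarAlgebra A]

theorem IsSelfAdjoint.pow_norm_le_norm_pow {a : A} (ha : IsSelfAdjoint a) {n : ℕ} (hn : n ≠ 0) :
    ‖a‖ ^ n ≤ ‖a ^ n‖ := by
  rcases subsingleton_or_nontrivial A with hA | hA
  · simp [Subsingleton.elim a 0, hn]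
  have h : (‖a‖₊ : ℝ≥0∞) ^ n ≤ ‖a ^ n‖₊ := by
    rw [← ha.spectralRadius_eq_nnnorm]
    exact (spectrum.spectralRadius_pow_le a n hn).trans (spectrum.spectralRadius_le_nnnorm _)
  exact_mod_cast h

theorem norm_add_star_self_pow_three_le (b : A) :
    ‖b + star b‖ ^ 3 ≤ ‖b ^ 3 + star b ^ 3‖ + ‖b + star b‖ * ‖star b * b + b * star b‖
      + 2 * (‖b‖ * ‖b ^ 2‖) := by
  have hexpand : (b + star b) ^ 3 = (b ^ 3 + star b ^ 3)
      + (b + star b) * (star b * b + b * star b) + (star b * b ^ 2 + b * star b ^ 2) := by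
    noncomm_ring
  have hlast : ‖star b * b ^ 2 + b * star b ^ 2‖ ≤ 2 * (‖b‖ * ‖b ^ 2‖) :=
    calc ‖star b * b ^ 2 + b * star b ^ 2‖ ≤ ‖star b‖ * ‖b ^ 2‖ + ‖b‖ * ‖star (b ^ 2)‖ := by
          rw [star_pow]; exact norm_add_le_of_le (norm_mul_le _ _) (norm_mul_le _ _)
      _ = 2 * (‖b‖ * ‖b ^ 2‖) := by rw [norm_star, norm_star]; ring
  calc ‖b + star b‖ ^ 3 ≤ ‖(b + star b) ^ 3‖ :=
        (IsSelfAdjoint.add_star_self b).pow_norm_le_norm_pow three_ne_zero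
    _ ≤ _ := by
      rw [hexpand]
      exact norm_add₃_le.trans (add_le_add_three le_rfl (norm_mul_le _ _) hlast)

end CStarAlgebra

section NumericalRadius

variable {H : Type*} [NormedAddCommGroup H] [InnerProductSpace ℂ H]

theorem norm_inner_apply_self_le_numRadius (A : H →L[ℂ] H) {x : H} (hx : ‖x‖ = 1) :
    ‖⟪A x, x⟫_ℂ‖ ≤ numRadius A := by
  refine le_csSup ⟨‖A‖, ?_⟩ ⟨x, hx, rfl⟩
  rintro _ ⟨y, hy, rfl⟩
  simpa [hy] using (norm_inner_le_norm (A y) y).trans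
    (mul_le_mul_of_nonneg_right (A.le_opNorm y) (norm_nonneg y))

theorem numRadius_nonneg (A : H →L[ℂ] H) : 0 ≤ numRadius A :=
  Real.sSup_nonneg (by rintro _ ⟨x, -, rfl⟩; exact norm_nonneg _)

theorem numRadius_smul (c : ℂ) (A : H →L[ℂ] H) : numRadius (c • A) = ‖c‖ * numRadius A := by
  rw [numRadius, numRadius, ← smul_eq_mul, ← Real.sSup_smul_of_nonneg (norm_nonneg c)]
  congr 1
  ext r
  simp [Set.mem_smul_set, eq_comm, mul_comm]

theorem numRadius_pow_le {A : H →L[ℂ] H} {n : ℕ} (hn : n ≠ 0) {M : ℝ} (hM : 0 ≤ M)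
    (h : ∀ x : H, ‖x‖ = 1 → ‖⟪A x, x⟫_ℂ‖ ^ n ≤ M) : numRadius A ^ n ≤ M := by
  have hroot : numRadius A ≤ M ^ (n⁻¹ : ℝ) := by
    refine Real.sSup_le ?_ (by positivity)
    rintro _ ⟨x, hx, rfl⟩
    rw [← Real.pow_rpow_inv_natCast (norm_nonneg _) hn]
    exact Real.rpow_le_rpow (by positivity) (h x hx) (by positivity)
  calc numRadius A ^ n ≤ (M ^ (n⁻¹ : ℝ)) ^ n := pow_le_pow_left₀ (numRadius_nonneg A) hroot n
    _ = M := Real.rpow_inv_natCast_pow hM hn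

variable [CompleteSpace H]

theorem inner_add_adjoint_apply_self (T : H →L[ℂ] H) (x : H) :
    ⟪(T + adjoint T) x, x⟫_ℂ = 2 * (⟪T x, x⟫_ℂ).re := by
  rw [add_apply, inner_add_left, adjoint_inner_left, ← inner_conj_symm x (T x), Complex.add_conj]
  push_cast; ring

theorem IsSelfAdjoint.norm_le_of_forall_abs_re_inner_le {T : H →L[ℂ] H} (hT : IsSelfAdjoint T)
    {M : ℝ} (hM : 0 ≤ M) (h : ∀ x : H, ‖x‖ = 1 → |(⟪T x, x⟫_ℂ).re| ≤ M) : ‖T‖ ≤ M := by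
  rw [T.norm_eq_iSup_rayleighQuotient hT.isSymmetric]
  refine ciSup_le fun x => ?_
  rcases eq_or_ne x 0 with rfl | hx
  · simpa using hM
  · have hu : ‖(‖x‖ : ℂ)⁻¹ • x‖ = 1 := norm_smul_inv_norm hx
    rw [← T.rayleigh_smul x (c := (‖x‖ : ℂ)⁻¹) (by simpa using hx)]
    rw [rayleighQuotient, hu, one_pow, div_one, reApplyInnerSelf_apply]
    exact h _ hu

theorem two_mul_re_inner_le_norm_add_adjoint (T : H →L[ℂ] H) {x : H} (hx : ‖x‖ = 1) :
    2 * (⟪T x, x⟫_ℂ).re ≤ ‖T + adjoint T‖ := by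
  have h := (abs_le.mp ((T + adjoint T).rayleighQuotient_le_norm x)).2
  rwa [rayleighQuotient, reApplyInnerSelf_apply, inner_add_adjoint_apply_self, hx, one_pow,
    div_one, RCLike.re_to_complex, ← Complex.ofReal_ofNat, ← Complex.ofReal_mul,
    Complex.ofReal_re] at h

theorem norm_add_adjoint_le_two_mul_numRadius (T : H →L[ℂ] H) :
    ‖T + adjoint T‖ ≤ 2 * numRadius T := by
  have hT : IsSelfAdjoint (T + adjoint T) := IsSelfAdjoint.add_star_self T
  refine hT.norm_le_of_forall_abs_re_inner_le (by positivity [numRadius_nonneg T]) fun x hx => ?_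
  rw [inner_add_adjoint_apply_self]
  simpa using (Complex.abs_re_le_norm _).trans (norm_inner_apply_self_le_numRadius T hx)

theorem adjoint_smul_mul_self_add_mul_adjoint {c : ℂ} (hc : ‖c‖ = 1) (T : H →L[ℂ] H) :
    adjoint (c • T) * (c • T) + (c • T) * adjoint (c • T) = adjoint T * T + T * adjoint T := by
  have hcc : star c * c = 1 := by
    rw [Complex.star_def, Complex.conj_mul', hc, Complex.ofReal_one, one_pow]
  simp only [← star_eq_adjoint, star_smul, smul_mul_smul_comm, hcc, mul_comm c, one_smul]

theorem norm_add_adjoint_pow_three_le (T : H →L[ℂ] H) :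
    ‖T + adjoint T‖ ^ 3 ≤ 2 * (numRadius (T ^ 3) + ‖T‖ * ‖T ^ 2‖
      + numRadius T * ‖adjoint T * T + T * adjoint T‖) := by
  have hcube : ‖T ^ 3 + adjoint T ^ 3‖ ≤ 2 * numRadius (T ^ 3) := by
    have h := norm_add_adjoint_le_two_mul_numRadius (T ^ 3)
    rwa [← star_eq_adjoint, star_pow] at h
  have hpart := norm_add_adjoint_le_two_mul_numRadius T
  calc ‖T + adjoint T‖ ^ 3 ≤ ‖T ^ 3 + adjoint T ^ 3‖
        + ‖T + adjoint T‖ * ‖adjoint T * T + T * adjoint T‖ + 2 * (‖T‖ * ‖T ^ 2‖) :=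
        norm_add_star_self_pow_three_le T
    _ ≤ 2 * numRadius (T ^ 3) + 2 * numRadius T * ‖adjoint T * T + T * adjoint T‖
        + 2 * (‖T‖ * ‖T ^ 2‖) := by gcongr
    _ = _ := by ring

end NumericalRadius

theorem stmt15_general {H : Type*} [NormedAddCommGroup H] [InnerProductSpace ℂ H]
    [CompleteSpace H] (A : H →L[ℂ] H) :
    numRadius A ^ 3 ≤ (1/4 : ℝ) * (numRadius (A ^ 3) + ‖A‖ * ‖A ^ 2‖ +
      numRadius A * ‖adjoint A * A + A * adjoint A‖) := by
  refine numRadius_pow_le three_ne_zero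
    (by positivity [numRadius_nonneg A, numRadius_nonneg (A ^ 3)]) fun x hx => ?_
  obtain ⟨c, hc, hca⟩ := RCLike.exists_norm_eq_mul_self ⟪A x, x⟫_ℂ
  have hc' : ‖star c‖ = 1 := by rwa [norm_star]
  set T : H →L[ℂ] H := star c • A
  have hTx : (⟪T x, x⟫_ℂ).re = ‖⟪A x, x⟫_ℂ‖ := by
    have h : ⟪T x, x⟫_ℂ = c * ⟪A x, x⟫_ℂ := by simp [T, mul_comm]
    rw [h, ← hca]
    simp
  have hT := norm_add_adjoint_pow_three_le T
  simp only [T, smul_pow, numRadius_smul, norm_smul, norm_pow, hc', one_pow, one_mul,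
    adjoint_smul_mul_self_add_mul_adjoint hc'] at hT
  have hlow := two_mul_re_inner_le_norm_add_adjoint T hx
  rw [hTx] at hlow
  nlinarith [pow_le_pow_left₀ (by positivity) hlow 3]

theorem stmt15 {H : Type*} [NormedAddCommGroup H] [InnerProductSpace ℂ H]
    [CompleteSpace H] [Nontrivial H] (A : H →L[ℂ] H) :
    numRadius A ^ 3 ≤ (1/4 : ℝ) * (numRadius (A ^ 3) + ‖A‖ * ‖A ^ 2‖ +
      numRadius A * ‖adjoint A * A + A * adjoint A‖) :=
  stmt15_general A
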